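/- arXiv:2102.04979 — 2 statements merged into one kernel-verified Lean document; each statement's English description precedes it below -/
import Mathlib

section
/- Let λ be a partition such that G_{λ/μ} = G_{λ/μ^T} for every partition μ (with the convention G_{λ/μ} = 0 when μ ⊄ λ); equivalently, for every μ and every finitely supported sequence m of nonnegative integers, the number of set-valued tableaux of shape λ/μ with content m equals the number of set-valued tableaux of shape λ/μ^T with content m. Then λ = (n, n−1, …, 1) for some nonnegative integer n. -/
open Finset

namespace Stembridge

/-- The staircase partition `ρ_n = (n, n-1, …, 1)` as a Young diagram
(cells `(i, j)` with `i + j < n`, matrix coordinates, 0-indexed). -/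
def staircase (n : ℕ) : YoungDiagram where
  cells := (Finset.range n ×ˢ Finset.range n).filter fun c => c.1 + c.2 < n
  isLowerSet := by
    rintro ⟨i₁, j₁⟩ ⟨i₂, j₂⟩ hle hmem
    obtain ⟨hi, hj⟩ := hle
    simp only [Finset.mem_coe, Finset.mem_filter, Finset.mem_product, Finset.mem_range] at hmem ⊢
    omega

/-- The one-row partition `(k)` as a Young diagram. -/
def rowShape (k : ℕ) : YoungDiagram where
  cells := ({0} : Finset ℕ) ×ˢ Finset.range k
  isLowerSet := by
    rintro ⟨i₁, j₁⟩ ⟨i₂, j₂⟩ hle hmem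
    obtain ⟨hi, hj⟩ := hle
    simp only [Finset.mem_coe, Finset.mem_product, Finset.mem_singleton, Finset.mem_range] at hmem ⊢
    omega

/-- The one-column partition `(1^k)` as a Young diagram. -/
def colShape (k : ℕ) : YoungDiagram where
  cells := Finset.range k ×ˢ ({0} : Finset ℕ)
  isLowerSet := by
    rintro ⟨i₁, j₁⟩ ⟨i₂, j₂⟩ hle hmem
    obtain ⟨hi, hj⟩ := hle
    simp only [Finset.mem_coe, Finset.mem_product, Finset.mem_singleton, Finset.mem_range] at hmem ⊢
    omega

/-- The cells of the skew diagram `λ/μ`. -/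
def skewCells (μ lam : YoungDiagram) : Finset (ℕ × ℕ) := lam.cells \ μ.cells

/-- A reverse plane partition on a finite shape of cells: a filling of the cells with
positive integers which weakly increases along rows (left to right) and down columns.
Entries outside the shape are `0`. -/
structure RPP (shape : Finset (ℕ × ℕ)) where
  entry : ℕ × ℕ → ℕ
  pos : ∀ c ∈ shape, 0 < entry c
  zero_off : ∀ c, c ∉ shape → entry c = 0
  row_le : ∀ i j, (i, j) ∈ shape → (i, j + 1) ∈ shape → entry (i, j) ≤ entry (i, j + 1)
  col_le : ∀ i j, (i, j) ∈ shape → (i + 1, j) ∈ shape → entry (i, j) ≤ entry (i + 1, j)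

/-- The weight of a reverse plane partition: `weight P i` is the number of columns of the
shape containing an entry equal to `i`. -/
def RPP.weight {shape : Finset (ℕ × ℕ)} (P : RPP shape) (i : ℕ) : ℕ :=
  ((shape.filter fun c => P.entry c = i).image Prod.snd).card

/-- A set-valued tableau on a finite shape of cells: a filling of the cells by finite
nonempty sets of positive integers such that `max(left) ≤ min(right)` for horizontally
adjacent cells and `max(upper) < min(lower)` for vertically adjacent cells.
Cells outside the shape carry `∅`. -/
structure SVT (shape : Finset (ℕ × ℕ)) where
  entry : ℕ × ℕ → Finset ℕ
  nonempty : ∀ c ∈ shape, (entry c).Nonempty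
  pos : ∀ c ∈ shape, ∀ x ∈ entry c, 0 < x
  empty_off : ∀ c, c ∉ shape → entry c = ∅
  row_le : ∀ i j, (i, j) ∈ shape → (i, j + 1) ∈ shape →
    ∀ a ∈ entry (i, j), ∀ b ∈ entry (i, j + 1), a ≤ b
  col_lt : ∀ i j, (i, j) ∈ shape → (i + 1, j) ∈ shape →
    ∀ a ∈ entry (i, j), ∀ b ∈ entry (i + 1, j), a < b

/-- The content of a set-valued tableau: `content T i` is the number of cells whose
set contains `i`. -/
def SVT.content {shape : Finset (ℕ × ℕ)} (T : SVT shape) (i : ℕ) : ℕ :=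
  (shape.filter fun c => i ∈ T.entry c).card

/-- The reverse reading word of a set-valued tableau: read the columns from rightmost to
leftmost, each column from top to bottom, the elements within a cell in decreasing order. -/
def SVT.word {shape : Finset (ℕ × ℕ)} (T : SVT shape) : List ℕ :=
  ((List.range (shape.sup Prod.snd + 1)).reverse).flatMap fun j =>
    (List.range (shape.sup Prod.fst + 1)).flatMap fun i =>
      ((T.entry (i, j)).sort (· ≤ ·)).reverse

/-- A word is a lattice word if in every prefix, for every `a ≥ 1`, the number of
occurrences of `a+1` is at most the number of occurrences of `a` (equivalently, the `i`-th
occurrence of `a+1` comes after the `i`-th occurrence of `a`). -/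
def IsLatticeWord (w : List ℕ) : Prop :=
  ∀ t a, 1 ≤ a → (w.take t).count (a + 1) ≤ (w.take t).count a

/-- The content of the staircase partition `ρ_n` as a function: `a ↦ n + 1 - a`
(so `a ↦ 0` for `a > n`), for `a ≥ 1`. -/
def staircaseContent (n : ℕ) : ℕ → ℕ := fun a => n + 1 - a

/-- A semistandard Young tableau on a finite shape of cells: a filling with positive
integers weakly increasing along rows and strictly increasing down columns.
Entries outside the shape are `0`. -/
structure SSYT (shape : Finset (ℕ × ℕ)) where
  entry : ℕ × ℕ → ℕ
  pos : ∀ c ∈ shape, 0 < entry c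
  zero_off : ∀ c, c ∉ shape → entry c = 0
  row_le : ∀ i j, (i, j) ∈ shape → (i, j + 1) ∈ shape → entry (i, j) ≤ entry (i, j + 1)
  col_lt : ∀ i j, (i, j) ∈ shape → (i + 1, j) ∈ shape → entry (i, j) < entry (i + 1, j)

/-- The type of a semistandard Young tableau: `type T i` is the number of entries equal
to `i`. -/
def SSYT.type {shape : Finset (ℕ × ℕ)} (T : SSYT shape) (i : ℕ) : ℕ :=
  (shape.filter fun c => T.entry c = i).card

/-- The cells of the skew shape `ν∗μ`: `μ` occupies the lower-left block and `ν` the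
upper-right block, the top-right corner of `μ` touching the bottom-left corner of `ν`. -/
def starCells (ν μ : YoungDiagram) : Finset (ℕ × ℕ) :=
  ν.cells.image (fun c => (c.1, c.2 + μ.rowLen 0)) ∪
    μ.cells.image (fun c => (c.1 + ν.colLen 0, c.2))

/-- The number of reverse plane partitions of shape `λ/μ` with weight `w` (with the
convention that this is `0` if `μ ⊄ λ`). -/
noncomputable def rppCount (lam μ : YoungDiagram) (w : ℕ →₀ ℕ) : ℕ :=
  if μ.cells ⊆ lam.cells then
    Nat.card {P : RPP (skewCells μ lam) // ∀ i, 1 ≤ i → P.weight i = w i}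
  else 0

/-- The number of set-valued tableaux of shape `λ/μ` with content `m` (with the
convention that this is `0` if `μ ⊄ λ`). -/
noncomputable def svtCount (lam μ : YoungDiagram) (m : ℕ →₀ ℕ) : ℕ :=
  if μ.cells ⊆ lam.cells then
    Nat.card {T : SVT (skewCells μ lam) // ∀ i, 1 ≤ i → T.content i = m i}
  else 0

/-- The number of semistandard Young tableaux of shape `λ/μ` of type `α` (with the
convention that this is `0` if `μ ⊄ λ`). -/
noncomputable def ssytCount (lam μ : YoungDiagram) (α : ℕ →₀ ℕ) : ℕ :=
  if μ.cells ⊆ lam.cells then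
    Nat.card {T : SSYT (skewCells μ lam) // ∀ i, 1 ≤ i → T.type i = α i}
  else 0

/-- The number of set-valued tableaux of a given shape whose reverse reading word is a
lattice word with content `c` (indexed from 1). -/
noncomputable def latticeCount (shape : Finset (ℕ × ℕ)) (c : ℕ → ℕ) : ℕ :=
  Nat.card {T : SVT shape // IsLatticeWord T.word ∧ ∀ a, 1 ≤ a → T.word.count a = c a}

/-! ### Auxiliary lemmas -/

theorem SVT.ext' {shape : Finset (ℕ × ℕ)} {T T' : SVT shape}
    (h : ∀ c, T.entry c = T'.entry c) : T = T' := by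
  cases T; cases T'
  congr 1
  exact funext h

/-- If all contents of `T` vanish (for indices ≥ 1), the shape is empty. -/
theorem shape_empty_of_content_zero {shape : Finset (ℕ × ℕ)} (T : SVT shape)
    (hT : ∀ a, 1 ≤ a → T.content a = 0) : ∀ c, c ∉ shape := by
  intro c hc
  obtain ⟨y, hy⟩ := T.nonempty c hc
  have hy1 : 1 ≤ y := T.pos c hc y hy
  have h0 := hT y hy1
  rw [SVT.content, Finset.card_eq_zero] at h0
  have : c ∈ shape.filter fun c => y ∈ T.entry c := Finset.mem_filter.2 ⟨hc, hy⟩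
  rw [h0] at this
  exact absurd this (Finset.notMem_empty c)

/-- If all contents of `T` for indices ≥ 2 vanish, each cell is filled by `{1}`. -/
theorem entry_eq_singleton_one {shape : Finset (ℕ × ℕ)} (T : SVT shape)
    (hT : ∀ a, 2 ≤ a → T.content a = 0) {c : ℕ × ℕ} (hc : c ∈ shape) :
    T.entry c = {1} := by
  have key : ∀ x ∈ T.entry c, x = 1 := by
    intro x hx
    have hx1 : 1 ≤ x := T.pos c hc x hx
    by_contra hne
    have hx2 : 2 ≤ x := by omega
    have h0 := hT x hx2
    rw [SVT.content, Finset.card_eq_zero] at h0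
    have : c ∈ shape.filter fun c => x ∈ T.entry c := Finset.mem_filter.2 ⟨hc, hx⟩
    rw [h0] at this
    exact absurd this (Finset.notMem_empty c)
  obtain ⟨y, hy⟩ := T.nonempty c hc
  have hy1 := key y hy
  subst hy1
  exact Finset.eq_singleton_iff_unique_mem.2 ⟨hy, key⟩

theorem svtCount_self (lam : YoungDiagram) : svtCount lam lam 0 = 1 := by
  rw [svtCount, if_pos (subset_refl _)]
  have hsh : skewCells lam lam = ∅ := Finset.sdiff_self _
  rw [Nat.card_eq_one_iff_unique]
  constructor
  · constructor
    intro ⟨T, hT⟩ ⟨T', hT'⟩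
    apply Subtype.ext
    apply SVT.ext'
    intro c
    rw [T.empty_off c (by rw [hsh]; exact Finset.notMem_empty c),
      T'.empty_off c (by rw [hsh]; exact Finset.notMem_empty c)]
  · refine ⟨⟨⟨fun _ => ∅, ?_, ?_, ?_, ?_, ?_⟩, ?_⟩⟩
    · intro c hc; rw [hsh] at hc; exact absurd hc (Finset.notMem_empty c)
    · intro c hc; rw [hsh] at hc; exact absurd hc (Finset.notMem_empty c)
    · intro c _; rfl
    · intro r j hij _; rw [hsh] at hij; exact absurd hij (Finset.notMem_empty _)
    · intro r j hij _; rw [hsh] at hij; exact absurd hij (Finset.notMem_empty _)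
    · intro a _; simp [SVT.content, hsh]

/-- From the hypothesis, `λ` is self-conjugate. -/
theorem self_conj_of_h (lam : YoungDiagram)
    (h : ∀ (μ : YoungDiagram) (m : ℕ →₀ ℕ),
      svtCount lam μ m = svtCount lam μ.transpose m) :
    lam.transpose = lam := by
  have h1 : svtCount lam lam.transpose 0 = 1 := by
    rw [h lam.transpose 0, YoungDiagram.transpose_transpose, svtCount_self]
  by_cases hsub : lam.transpose.cells ⊆ lam.cells
  · rw [svtCount, if_pos hsub] at h1
    have hne : Nonempty {T : SVT (skewCells lam.transpose lam) //
        ∀ i, 1 ≤ i → T.content i = (0 : ℕ →₀ ℕ) i} :=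
      (Nat.card_pos_iff.1 (by omega)).1
    obtain ⟨T, hT⟩ := hne
    have hempty := shape_empty_of_content_zero T (by simpa using hT)
    ext c
    constructor
    · intro hc
      exact YoungDiagram.mem_cells _ |>.2 (hsub hc)
    · intro hc
      by_contra hnc
      exact hempty c (Finset.mem_sdiff.2 ⟨hc, hnc⟩)
  · rw [svtCount, if_neg hsub] at h1
    exact absurd h1 (by omega)

/-- Key step: `λ` self-conjugate cannot have two equal adjacent positive rows
with a strictly shorter row after them. -/
theorem no_flat_pair (lam : YoungDiagram)
    (h : ∀ (μ : YoungDiagram) (m : ℕ →₀ ℕ),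
      svtCount lam μ m = svtCount lam μ.transpose m)
    (hconj : lam.transpose = lam) (i k : ℕ) (hk : 0 < k)
    (h1 : lam.rowLen i = k) (h2 : lam.rowLen (i + 1) = k)
    (h3 : lam.rowLen (i + 2) < k) : False := by
  have hmemconj : ∀ a b : ℕ, (a, b) ∈ lam ↔ (b, a) ∈ lam := by
    intro a b
    conv_lhs => rw [← hconj]
    exact YoungDiagram.mem_transpose
  -- the vertical domino
  set D : Finset (ℕ × ℕ) := {(i, k - 1), (i + 1, k - 1)} with hD
  -- the horizontal domino
  set Dt : Finset (ℕ × ℕ) := {(k - 1, i), (k - 1, i + 1)} with hDt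
  have hmemD : ∀ a b : ℕ, (a, b) ∈ D ↔ ((a = i ∨ a = i + 1) ∧ b = k - 1) := by
    intro a b
    simp only [hD, Finset.mem_insert, Finset.mem_singleton, Prod.mk.injEq]
    tauto
  have hmemDt : ∀ a b : ℕ, (a, b) ∈ Dt ↔ (a = k - 1 ∧ (b = i ∨ b = i + 1)) := by
    intro a b
    simp only [hDt, Finset.mem_insert, Finset.mem_singleton, Prod.mk.injEq]
    tauto
  have hDlam : D ⊆ lam.cells := by
    intro c hc
    obtain ⟨a, b⟩ := c
    rw [hmemD] at hc
    rw [YoungDiagram.mem_cells, YoungDiagram.mem_iff_lt_rowLen]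
    rcases hc.1 with rfl | rfl <;> omega
  have hDtlam : Dt ⊆ lam.cells := by
    intro c hc
    obtain ⟨a, b⟩ := c
    rw [hmemDt] at hc
    rw [YoungDiagram.mem_cells, hmemconj, YoungDiagram.mem_iff_lt_rowLen]
    rcases hc.2 with rfl | rfl <;> omega
  -- μ = λ minus the vertical domino
  have hlower : IsLowerSet ((lam.cells \ D : Finset (ℕ × ℕ)) : Set (ℕ × ℕ)) := by
    rintro ⟨a', b'⟩ ⟨a, b⟩ ⟨(ha : a ≤ a'), (hb : b ≤ b')⟩ hmem
    simp only [Finset.coe_sdiff, Set.mem_diff, Finset.mem_coe, Finset.mem_sdiff] at hmem ⊢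
    obtain ⟨hm1, hm2⟩ := hmem
    rw [YoungDiagram.mem_cells] at hm1
    refine ⟨YoungDiagram.mem_cells _ |>.2 (lam.up_left_mem ha hb hm1), ?_⟩
    intro hcD
    rw [hmemD] at hcD
    -- a ∈ {i, i+1}, b = k-1; derive a contradiction about (a', b')
    have hb' : k - 1 ≤ b' := by omega
    have ha'i : i ≤ a' := by rcases hcD.1 with rfl | rfl <;> omega
    rw [YoungDiagram.mem_iff_lt_rowLen] at hm1
    by_cases hcase : a' ≤ i + 1
    · -- then rowLen a' = k hence b' = k - 1, so (a', b') ∈ D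
      have hra : lam.rowLen a' = k := by
        rcases (by omega : a' = i ∨ a' = i + 1) with rfl | rfl <;> assumption
      apply hm2
      rw [hmemD]
      omega
    · have : lam.rowLen a' ≤ lam.rowLen (i + 2) := lam.rowLen_anti _ _ (by omega)
      omega
  set μ : YoungDiagram := ⟨lam.cells \ D, hlower⟩ with hμ
  have hμsub : μ.cells ⊆ lam.cells := Finset.sdiff_subset
  have hskew : skewCells μ lam = D := by
    rw [skewCells, hμ]
    simp only
    rw [Finset.sdiff_sdiff_self_left]
    exact Finset.inter_eq_right.2 hDlam
  -- cells of μ.transpose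
  have hμt : μ.transpose.cells = lam.cells \ Dt := by
    ext c
    obtain ⟨a, b⟩ := c
    rw [YoungDiagram.mem_cells, YoungDiagram.mem_transpose]
    simp only [Prod.swap_prod_mk, hμ, YoungDiagram.mem_mk, Finset.mem_sdiff,
      YoungDiagram.mem_cells]
    rw [hmemconj b a, hmemD, hmemDt]
    tauto
  have hμtsub : μ.transpose.cells ⊆ lam.cells := by
    rw [hμt]; exact Finset.sdiff_subset
  have hskewt : skewCells μ.transpose lam = Dt := by
    rw [skewCells, hμt, Finset.sdiff_sdiff_self_left]
    exact Finset.inter_eq_right.2 hDtlam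
  -- the content: two 1's
  set m : ℕ →₀ ℕ := Finsupp.single 1 2 with hm
  have hm1 : m 1 = 2 := by simp [hm]
  have hma : ∀ a, a ≠ 1 → m a = 0 := by
    intro a ha; simp [hm, Finsupp.single_apply, ha.symm]
  -- left side: no SVT of the vertical domino with content m
  have hleft : svtCount lam μ m = 0 := by
    rw [svtCount, if_pos hμsub]
    have : IsEmpty {T : SVT (skewCells μ lam) // ∀ i, 1 ≤ i → T.content i = m i} := by
      constructor
      rintro ⟨T, hT⟩
      have hc1 : (i, k - 1) ∈ skewCells μ lam := by
        rw [hskew, hmemD]; omega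
      have hc2 : (i + 1, k - 1) ∈ skewCells μ lam := by
        rw [hskew, hmemD]; omega
      have hT2 : ∀ a, 2 ≤ a → T.content a = 0 := by
        intro a ha
        rw [hT a (by omega), hma a (by omega)]
      have he1 := entry_eq_singleton_one T hT2 hc1
      have he2 := entry_eq_singleton_one T hT2 hc2
      have := T.col_lt i (k - 1) hc1 hc2 1 (by rw [he1]; exact Finset.mem_singleton_self 1)
        1 (by rw [he2]; exact Finset.mem_singleton_self 1)
      omega
    exact Nat.card_of_isEmpty
  -- right side: exactly one SVT of the horizontal domino with content m
  have hright : svtCount lam μ.transpose m = 1 := by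
    rw [svtCount, if_pos hμtsub]
    rw [Nat.card_eq_one_iff_unique]
    have hcardDt : Dt.card = 2 := by
      rw [hDt, Finset.card_insert_of_notMem (by simp), Finset.card_singleton]
    constructor
    · constructor
      rintro ⟨T, hT⟩ ⟨T', hT'⟩
      have hT2 : ∀ a, 2 ≤ a → T.content a = 0 := fun a ha => by
        rw [hT a (by omega), hma a (by omega)]
      have hT'2 : ∀ a, 2 ≤ a → T'.content a = 0 := fun a ha => by
        rw [hT' a (by omega), hma a (by omega)]
      apply Subtype.ext
      apply SVT.ext'
      intro c
      by_cases hc : c ∈ skewCells μ.transpose lam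
      · rw [entry_eq_singleton_one T hT2 hc, entry_eq_singleton_one T' hT'2 hc]
      · rw [T.empty_off c hc, T'.empty_off c hc]
    · -- existence
      classical
      set f : ℕ × ℕ → Finset ℕ :=
        fun c => if c ∈ skewCells μ.transpose lam then {1} else ∅ with hf
      have hfin : ∀ c ∈ skewCells μ.transpose lam, f c = {1} := by
        intro c hc; rw [hf]; exact if_pos hc
      have hfout : ∀ c, c ∉ skewCells μ.transpose lam → f c = ∅ := by
        intro c hc; rw [hf]; exact if_neg hc
      refine ⟨⟨⟨f, ?_, ?_, ?_, ?_, ?_⟩, ?_⟩⟩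
      · intro c hc; rw [hfin c hc]; exact ⟨1, Finset.mem_singleton_self 1⟩
      · intro c hc x hx
        rw [hfin c hc, Finset.mem_singleton] at hx
        omega
      · exact hfout
      · intro r j h1' h2' a ha b hb
        rw [hfin _ h1', Finset.mem_singleton] at ha
        rw [hfin _ h2', Finset.mem_singleton] at hb
        omega
      · intro r j h1' h2' a ha b hb
        exfalso
        rw [hskewt, hmemDt] at h1' h2'
        omega
      · intro a ha
        by_cases ha1 : a = 1
        · subst ha1
          rw [hm1]
          show ((skewCells μ.transpose lam).filter fun c => 1 ∈ f c).card = 2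
          rw [show ((skewCells μ.transpose lam).filter fun c => 1 ∈ f c) =
              skewCells μ.transpose lam from ?_]
          · rw [hskewt, hcardDt]
          · apply Finset.filter_true_of_mem
            intro c hc
            rw [hfin c hc]
            exact Finset.mem_singleton_self 1
        · rw [hma a ha1]
          show ((skewCells μ.transpose lam).filter fun c => a ∈ f c).card = 0
          rw [Finset.card_eq_zero]
          apply Finset.filter_false_of_mem
          intro c hc
          rw [hfin c hc, Finset.mem_singleton]
          exact ha1
  rw [h μ m, hright] at hleft
  omega

/-- If `G_{λ/μ} = G_{λ/μᵀ}` for every partition `μ` (with the convention that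
`G_{λ/μ} = 0` when `μ ⊄ λ`), i.e. for every `μ` and every finitely supported sequence
`m`, the number of set-valued tableaux of shape `λ/μ` with content `m` equals the number
of set-valued tableaux of shape `λ/μᵀ` with content `m`, then `λ` is a staircase
`(n, n-1, …, 1)`. -/
theorem staircase_of_svt_transpose_eq (lam : YoungDiagram)
    (h : ∀ (μ : YoungDiagram) (m : ℕ →₀ ℕ),
      svtCount lam μ m = svtCount lam μ.transpose m) :
    ∃ n : ℕ, lam = staircase n := by
  have hconj := self_conj_of_h lam h
  have hmemconj : ∀ a b : ℕ, (a, b) ∈ lam ↔ (b, a) ∈ lam := by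
    intro a b
    conv_lhs => rw [← hconj]
    exact YoungDiagram.mem_transpose
  obtain ⟨n, hn⟩ : ∃ n, lam.rowLen 0 = n := ⟨_, rfl⟩
  have hcol0 : ∀ i : ℕ, (i, 0) ∈ lam ↔ i < n := by
    intro i
    rw [hmemconj, YoungDiagram.mem_iff_lt_rowLen, hn]
  have hposrow : ∀ i : ℕ, 0 < lam.rowLen i ↔ i < n := by
    intro i
    rw [← hcol0 i, YoungDiagram.mem_iff_lt_rowLen]
  have key : ∀ d i : ℕ, n - i ≤ d → 0 < lam.rowLen (i + 1) →
      lam.rowLen (i + 1) = lam.rowLen i → False := by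
    intro d
    induction d with
    | zero =>
      intro i hd hpos _
      have : i + 1 < n := (hposrow (i + 1)).1 hpos
      omega
    | succ d ih =>
      intro i hd hpos heq
      have hle : lam.rowLen (i + 2) ≤ lam.rowLen (i + 1) :=
        lam.rowLen_anti _ _ (by omega)
      rcases eq_or_lt_of_le hle with he | hlt
      · have hin : i + 1 < n := (hposrow (i + 1)).1 hpos
        exact ih (i + 1) (by omega) (hpos.trans_le he.symm.le) he
      · exact no_flat_pair lam h hconj i (lam.rowLen (i + 1)) hpos heq.symm rfl hlt
  have hstrict : ∀ i : ℕ, 0 < lam.rowLen (i + 1) →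
      lam.rowLen (i + 1) < lam.rowLen i := by
    intro i hpos
    have hle : lam.rowLen (i + 1) ≤ lam.rowLen i := lam.rowLen_anti _ _ (by omega)
    rcases lt_or_eq_of_le hle with hlt | heq
    · exact hlt
    · exact absurd (key n i (by omega) hpos heq) (by tauto)
  have hub : ∀ i : ℕ, 0 < lam.rowLen i → lam.rowLen i + i ≤ n := by
    intro i
    induction i with
    | zero => intro _; omega
    | succ i ih =>
      intro hpos
      have h1 := hstrict i hpos
      have h2 := ih (by omega)
      omega
  have aux : ∀ d i : ℕ, n = i + d + 1 → n - i ≤ lam.rowLen i := by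
    intro d
    induction d with
    | zero =>
      intro i hi
      have : 0 < lam.rowLen i := (hposrow i).2 (by omega)
      omega
    | succ d ih =>
      intro i hi
      have h1 := ih (i + 1) (by omega)
      have h2 : 0 < lam.rowLen (i + 1) := by omega
      have h3 := hstrict i h2
      omega
  have hlb : ∀ i : ℕ, i < n → n - i ≤ lam.rowLen i := by
    intro i hi
    exact aux (n - i - 1) i (by omega)
  refine ⟨n, ?_⟩
  apply YoungDiagram.ext
  ext ⟨a, b⟩
  simp only [staircase, YoungDiagram.mem_cells, Finset.mem_filter, Finset.mem_product,
    Finset.mem_range, YoungDiagram.mem_mk]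
  rw [YoungDiagram.mem_iff_lt_rowLen]
  constructor
  · intro hb
    have hpos : 0 < lam.rowLen a := by omega
    have := hub a hpos
    exact ⟨⟨by omega, by omega⟩, by omega⟩
  · rintro ⟨⟨han, hbn⟩, hab⟩
    have := hlb a han
    omega

end Stembridge
end

section
/- Let ν be a partition and let k and n be positive integers with k ≤ n. Then the number of set-valued tableaux of shape ν∗(k) whose reverse reading word is a lattice word with content ρ_n = (n, n−1, …, 1) equals the number of set-valued tableaux of shape ν∗(1^k) whose reverse reading word is a lattice word with content ρ_n; that is, c^{ρ_n}_{(k)ν} = c^{ρ_n}_{(1^k)ν}. -/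
open Finset

namespace Stembridge

/-! In both shapes the reverse reading word is the word of the `ν` part followed by the word of
the strip `(k)` or `(1^k)`. In content `ρ_n` each letter `a ≤ n` occurs exactly once more than
`a + 1`, so a lattice word stays a lattice word when a strip word repeating no letter is appended.
A column strip never repeats a letter, and lattice-ness forbids the weakly decreasing row strip
word to repeat one. So the row strip is strictly increasing, and turning it into a column, with
`ν` moved next to it, is a bijection that keeps the `ν` part of the word and permutes the strip
part. -/

theorem _root_.List.Pairwise.exists_eq_append_of_ge {α : Type*} [LinearOrder α] {v : List α}
    (hv : v.Pairwise (· ≥ ·)) (a : α) :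
    ∃ v₁ v₂, v = v₁ ++ v₂ ∧ (∀ x ∈ v₁, a < x) ∧ ∀ x ∈ v₂, x ≤ a := by
  induction v with
  | nil => exact ⟨[], [], rfl, by simp, by simp⟩
  | cons x t ih =>
    obtain ⟨hxt, ht⟩ := List.pairwise_cons.mp hv
    by_cases hx : a < x
    · obtain ⟨v₁, v₂, rfl, h₁, h₂⟩ := ih ht
      exact ⟨x :: v₁, v₂, rfl, by simpa [hx] using h₁, h₂⟩
    · refine ⟨[], x :: t, rfl, by simp, ?_⟩
      simp only [List.mem_cons, forall_eq_or_imp]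
      exact ⟨not_lt.mp hx, fun y hy => (hxt y hy).trans (not_lt.mp hx)⟩

theorem _root_.List.Pairwise.rel_of_lt_of_lt_range {R : ℕ → ℕ → Prop} {k i j : ℕ}
    (h : (List.range k).Pairwise R) (hij : i < j) (hj : j < k) : R i j := by
  have := List.pairwise_iff_getElem.mp h i j (by simp; omega) (by simpa) hij
  simpa only [List.getElem_range] using this

def IsLatticeWordOfContent (c : ℕ → ℕ) (w : List ℕ) : Prop :=
  IsLatticeWord w ∧ ∀ a, 1 ≤ a → w.count a = c a

namespace IsLatticeWord

variable {u v w : List ℕ}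

theorem of_append (h : IsLatticeWord (u ++ v)) : IsLatticeWord u := by
  intro t a ha
  rcases le_total t u.length with ht | ht
  · simpa [List.take_append_of_le_length ht] using h t a ha
  · simpa [List.take_of_length_le ht] using h u.length a ha

theorem count_succ_le (h : IsLatticeWord w) {a : ℕ} (ha : 1 ≤ a) :
    w.count (a + 1) ≤ w.count a := by
  simpa using h w.length a ha

theorem append_of_nodup {n : ℕ} (hu : IsLatticeWord u) (hv : v.Nodup)
    (hc : ∀ a, 1 ≤ a → (u ++ v).count a = staircaseContent n a) :
    IsLatticeWord (u ++ v) := by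
  intro t a ha
  rcases le_total t u.length with ht | ht
  · rw [List.take_append_of_le_length ht]
    exact hu t a ha
  obtain ⟨s, rfl⟩ := Nat.exists_eq_add_of_le ht
  rw [List.take_length_add_append]
  have := hu.count_succ_le ha
  have := (List.take_sublist s v).count_le a
  have := (List.take_sublist s v).count_le (a + 1)
  have := List.nodup_iff_count_le_one.mp hv a
  have := List.nodup_iff_count_le_one.mp hv (a + 1)
  have := hc a ha
  have := hc (a + 1) (by omega)
  simp only [staircaseContent, List.count_append] at *
  omega

end IsLatticeWord

namespace IsLatticeWordOfContent

variable {u v v' : List ℕ} {n : ℕ}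

/-- The prefix ending with the letters of `v` exceeding `a` contains every `a + 1` but no `a` of
`v`, which leaves room for at most one `a` in `v`. -/
theorem nodup_of_pairwise_ge (h : IsLatticeWordOfContent (staircaseContent n) (u ++ v))
    (hv : v.Pairwise (· ≥ ·)) (hpos : ∀ x ∈ v, 0 < x) : v.Nodup := by
  refine List.nodup_iff_count_le_one.mpr fun a => ?_
  rcases Nat.eq_zero_or_pos a with rfl | ha
  · exact (List.count_eq_zero.mpr fun h0 => (hpos 0 h0).false).trans_le zero_le_one
  obtain ⟨v₁, v₂, rfl, h₁, h₂⟩ := hv.exists_eq_append_of_ge a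
  have hpre : IsLatticeWord (u ++ v₁ ++ v₂) := by simpa only [List.append_assoc] using h.1
  have := hpre.of_append.count_succ_le ha
  have hv₁ : v₁.count a = 0 := List.count_eq_zero.mpr fun hm => (h₁ a hm).false
  have hv₂ : v₂.count (a + 1) = 0 := List.count_eq_zero.mpr fun hm => by
    have := h₂ _ hm
    omega
  have := h.2 a ha
  have := h.2 (a + 1) (by omega)
  simp only [staircaseContent, List.count_append] at *
  omega

theorem append_perm (h : IsLatticeWordOfContent (staircaseContent n) (u ++ v)) (hv : v.Nodup)
    (hp : v.Perm v') : IsLatticeWordOfContent (staircaseContent n) (u ++ v') := by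
  have hc : ∀ a, 1 ≤ a → (u ++ v').count a = staircaseContent n a := fun a ha => by
    rw [List.count_append, ← hp.count_eq, ← List.count_append]
    exact h.2 a ha
  exact ⟨h.1.of_append.append_of_nodup (hp.nodup_iff.mp hv) hc, hc⟩

end IsLatticeWordOfContent

def cellWord (s : Finset ℕ) : List ℕ := (s.sort (· ≤ ·)).reverse

@[simp] theorem cellWord_empty : cellWord ∅ = [] := by simp [cellWord]

@[simp] theorem mem_cellWord {s : Finset ℕ} {x : ℕ} : x ∈ cellWord s ↔ x ∈ s := by
  simp [cellWord]

theorem nodup_cellWord (s : Finset ℕ) : (cellWord s).Nodup :=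
  List.nodup_reverse.mpr (s.sort_nodup _)

theorem pairwise_cellWord (s : Finset ℕ) : (cellWord s).Pairwise (· ≥ ·) :=
  List.pairwise_reverse.mpr (s.pairwise_sort _)

def blockWord (e : ℕ × ℕ → Finset ℕ) (r₀ h c₀ w : ℕ) : List ℕ :=
  (List.range w).reverse.flatMap fun j =>
    (List.range h).flatMap fun i => cellWord (e (r₀ + i, c₀ + j))

section blockWord

variable {e e' : ℕ × ℕ → Finset ℕ} {r₀ r₀' c₀ c₀' h h₁ h₂ w w₁ w₂ : ℕ}

theorem blockWord_congr (he : ∀ i < h, ∀ j < w, e (r₀ + i, c₀ + j) = e' (r₀' + i, c₀' + j)) :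
    blockWord e r₀ h c₀ w = blockWord e' r₀' h c₀' w := by
  refine List.flatMap_congr fun j hj => List.flatMap_congr fun i hi => ?_
  simp only [List.mem_reverse, List.mem_range] at hi hj
  rw [he i hi j hj]

theorem blockWord_eq_nil (he : ∀ i < h, ∀ j < w, e (r₀ + i, c₀ + j) = ∅) :
    blockWord e r₀ h c₀ w = [] := by
  rw [blockWord_congr (e' := fun _ => ∅) (r₀' := 0) (c₀' := 0) he]
  simp [blockWord]

theorem blockWord_add_cols :
    blockWord e r₀ h c₀ (w₁ + w₂) = blockWord e r₀ h (c₀ + w₁) w₂ ++ blockWord e r₀ h c₀ w₁ := by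
  simp [blockWord, List.range_add, List.flatMap_append, ← List.map_reverse, List.flatMap_map,
    Nat.add_assoc]

theorem blockWord_add_rows :
    blockWord e r₀ (h₁ + h₂) c₀ w = (List.range w).reverse.flatMap fun j =>
      ((List.range h₁).flatMap fun i => cellWord (e (r₀ + i, c₀ + j))) ++
        (List.range h₂).flatMap fun i => cellWord (e (r₀ + h₁ + i, c₀ + j)) := by
  simp [blockWord, List.range_add, List.flatMap_append, List.flatMap_map, Nat.add_assoc]

theorem blockWord_add_rows_of_eq_empty_right
    (he : ∀ i < h₂, ∀ j < w, e (r₀ + h₁ + i, c₀ + j) = ∅) :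
    blockWord e r₀ (h₁ + h₂) c₀ w = blockWord e r₀ h₁ c₀ w := by
  rw [blockWord_add_rows]
  refine List.flatMap_congr fun j hj => ?_
  rw [(List.flatMap_eq_nil_iff (l := List.range h₂)).mpr fun i hi => ?_, List.append_nil]
  simp only [List.mem_reverse, List.mem_range] at hi hj
  rw [he i hi j hj, cellWord_empty]

theorem blockWord_add_rows_of_eq_empty_left (he : ∀ i < h₁, ∀ j < w, e (r₀ + i, c₀ + j) = ∅) :
    blockWord e r₀ (h₁ + h₂) c₀ w = blockWord e (r₀ + h₁) h₂ c₀ w := by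
  rw [blockWord_add_rows]
  refine List.flatMap_congr fun j hj => ?_
  rw [(List.flatMap_eq_nil_iff (l := List.range h₁)).mpr fun i hi => ?_, List.nil_append]
  simp only [List.mem_reverse, List.mem_range] at hi hj
  rw [he i hi j hj, cellWord_empty]

theorem blockWord_eq_of_le (hh : h₁ ≤ h) (hw : w₁ ≤ w)
    (he : ∀ i < h, ∀ j < w, h₁ ≤ i ∨ w₁ ≤ j → e (r₀ + i, c₀ + j) = ∅) :
    blockWord e r₀ h c₀ w = blockWord e r₀ h₁ c₀ w₁ := by
  obtain ⟨h₂, rfl⟩ := Nat.exists_eq_add_of_le hh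
  obtain ⟨w₂, rfl⟩ := Nat.exists_eq_add_of_le hw
  rw [blockWord_add_cols, blockWord_eq_nil fun i hi j hj => ?_, List.nil_append,
    blockWord_add_rows_of_eq_empty_right fun i hi j hj => ?_]
  · rw [Nat.add_assoc]
    exact he _ (by omega) _ (by omega) (Or.inl (by omega))
  · rw [Nat.add_assoc]
    exact he _ (by omega) _ (by omega) (Or.inr (by omega))

theorem blockWord_one_row :
    blockWord e r₀ 1 c₀ w = (List.range w).reverse.flatMap fun j => cellWord (e (r₀, c₀ + j)) := by
  simp [blockWord]

theorem blockWord_one_col :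
    blockWord e r₀ h c₀ 1 = (List.range h).flatMap fun i => cellWord (e (r₀ + i, c₀)) := by
  simp [blockWord]

theorem blockWord_one_row_perm (he : ∀ j < w, e (r₀, c₀ + j) = e' (r₀' + j, c₀')) :
    (blockWord e r₀ 1 c₀ w).Perm (blockWord e' r₀' w c₀' 1) := by
  rw [blockWord_one_row, blockWord_one_col,
    List.flatMap_congr fun j hj => by rw [he j (List.mem_range.mp (List.mem_reverse.mp hj))]]
  exact (List.reverse_perm _).flatMap_right _

end blockWord

namespace SVT

variable {s t : Finset (ℕ × ℕ)}

theorem ext {T₁ T₂ : SVT s} (h : T₁.entry = T₂.entry) : T₁ = T₂ := by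
  cases T₁
  cases T₂
  cases h
  rfl

theorem word_eq_blockWord (T : SVT s) {h w : ℕ} (hs : ∀ c ∈ s, c.1 < h ∧ c.2 < w) :
    T.word = blockWord T.entry 0 h 0 w := by
  set h₀ := s.sup Prod.fst + 1
  set w₀ := s.sup Prod.snd + 1
  have hs₀ : ∀ c ∈ s, c.1 < h₀ ∧ c.2 < w₀ := fun c hc =>
    ⟨Nat.lt_succ_of_le (s.le_sup (f := Prod.fst) hc),
      Nat.lt_succ_of_le (s.le_sup (f := Prod.snd) hc)⟩
  have hmax : ∀ {h₁ w₁ : ℕ}, h₁ ≤ max h h₀ → w₁ ≤ max w w₀ → (∀ c ∈ s, c.1 < h₁ ∧ c.2 < w₁) →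
      blockWord T.entry 0 (max h h₀) 0 (max w w₀) = blockWord T.entry 0 h₁ 0 w₁ :=
    fun hh hw hs₁ => blockWord_eq_of_le hh hw fun i _ j _ hij => T.empty_off _ fun hc => by
      have := hs₁ _ hc
      simp only [Nat.zero_add] at this
      omega
  calc T.word = blockWord T.entry 0 h₀ 0 w₀ := by simp [SVT.word, blockWord, cellWord, h₀, w₀]
    _ = blockWord T.entry 0 h 0 w := by
      rw [← hmax (le_max_right _ _) (le_max_right _ _) hs₀,
        hmax (le_max_left _ _) (le_max_left _ _) hs]

theorem pos_of_mem_blockWord (T : SVT s) {r₀ h c₀ w x : ℕ}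
    (hx : x ∈ blockWord T.entry r₀ h c₀ w) : 0 < x := by
  simp only [blockWord, List.mem_flatMap, mem_cellWord] at hx
  obtain ⟨j, -, i, -, hx⟩ := hx
  by_cases hc : (r₀ + i, c₀ + j) ∈ s
  · exact T.pos _ hc x hx
  · simp [T.empty_off _ hc] at hx

theorem le_of_mem_row (T : SVT s) {i j₁ j₂ : ℕ} (hj : j₁ < j₂)
    (hs : ∀ j, j₁ ≤ j → j ≤ j₂ → (i, j) ∈ s) {a b : ℕ} (ha : a ∈ T.entry (i, j₁))
    (hb : b ∈ T.entry (i, j₂)) : a ≤ b := by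
  induction j₂, hj using Nat.le_induction generalizing b with
  | base => exact T.row_le i j₁ (hs _ le_rfl (by omega)) (hs _ (by omega) le_rfl) a ha b hb
  | succ j₂ hj ih =>
    obtain ⟨c, hc⟩ := T.nonempty _ (hs j₂ (by omega) (by omega))
    exact (ih (fun j h₁ h₂ => hs j h₁ (by omega)) hc).trans
      (T.row_le i j₂ (hs _ (by omega) (by omega)) (hs _ (by omega) le_rfl) c hc b hb)

theorem lt_of_mem_col (T : SVT s) {i₁ i₂ j : ℕ} (hi : i₁ < i₂)
    (hs : ∀ i, i₁ ≤ i → i ≤ i₂ → (i, j) ∈ s) {a b : ℕ} (ha : a ∈ T.entry (i₁, j))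
    (hb : b ∈ T.entry (i₂, j)) : a < b := by
  induction i₂, hi using Nat.le_induction generalizing b with
  | base => exact T.col_lt i₁ j (hs _ le_rfl (by omega)) (hs _ (by omega) le_rfl) a ha b hb
  | succ i₂ hi ih =>
    obtain ⟨c, hc⟩ := T.nonempty _ (hs i₂ (by omega) (by omega))
    exact (ih (fun i h₁ h₂ => hs i h₁ (by omega)) hc).trans
      (T.col_lt i₂ j (hs _ (by omega) (by omega)) (hs _ (by omega) le_rfl) c hc b hb)

def comap (T : SVT s) (f : ℕ × ℕ → ℕ × ℕ) (hf : ∀ c ∈ t, f c ∈ s)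
    (hrow : ∀ i j, (i, j) ∈ t → (i, j + 1) ∈ t →
      ∀ a ∈ T.entry (f (i, j)), ∀ b ∈ T.entry (f (i, j + 1)), a ≤ b)
    (hcol : ∀ i j, (i, j) ∈ t → (i + 1, j) ∈ t →
      ∀ a ∈ T.entry (f (i, j)), ∀ b ∈ T.entry (f (i + 1, j)), a < b) : SVT t where
  entry c := if c ∈ t then T.entry (f c) else ∅
  nonempty c hc := by simpa only [if_pos hc] using T.nonempty _ (hf c hc)
  pos c hc := by simpa only [if_pos hc] using T.pos _ (hf c hc)
  empty_off c hc := if_neg hc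
  row_le i j h₁ h₂ := by simpa only [if_pos h₁, if_pos h₂] using hrow i j h₁ h₂
  col_lt i j h₁ h₂ := by simpa only [if_pos h₁, if_pos h₂] using hcol i j h₁ h₂

section comap

variable {T : SVT s} {f : ℕ × ℕ → ℕ × ℕ} {hf : ∀ c ∈ t, f c ∈ s}
  {hrow : ∀ i j, (i, j) ∈ t → (i, j + 1) ∈ t →
    ∀ a ∈ T.entry (f (i, j)), ∀ b ∈ T.entry (f (i, j + 1)), a ≤ b}
  {hcol : ∀ i j, (i, j) ∈ t → (i + 1, j) ∈ t →
    ∀ a ∈ T.entry (f (i, j)), ∀ b ∈ T.entry (f (i + 1, j)), a < b}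

theorem comap_entry {c : ℕ × ℕ} (hc : f c ∈ s → c ∈ t) :
    (T.comap f hf hrow hcol).entry c = T.entry (f c) := by
  by_cases h : c ∈ t
  · exact if_pos h
  · exact (if_neg h).trans (T.empty_off _ (mt hc h)).symm

theorem comap_comap {g : ℕ × ℕ → ℕ × ℕ} (hg : ∀ c ∈ s, g c ∈ t) (hfg : ∀ c ∈ s, f (g c) = c)
    {hrow' hcol'} : (T.comap f hf hrow hcol).comap g hg hrow' hcol' = T := by
  refine ext (funext fun c => ?_)
  by_cases hc : c ∈ s
  · rw [comap_entry fun _ => hc, comap_entry fun _ => hg c hc, hfg c hc]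
  · exact (if_neg hc).trans (T.empty_off c hc).symm

end comap

end SVT

theorem _root_.YoungDiagram.lt_colLen_zero {ν : YoungDiagram} {i j : ℕ} (h : (i, j) ∈ ν) :
    i < ν.colLen 0 :=
  YoungDiagram.mem_iff_lt_colLen.mp (ν.up_left_mem le_rfl (Nat.zero_le j) h)

theorem _root_.YoungDiagram.lt_rowLen_zero {ν : YoungDiagram} {i j : ℕ} (h : (i, j) ∈ ν) :
    j < ν.rowLen 0 :=
  YoungDiagram.mem_iff_lt_rowLen.mp (ν.up_left_mem (Nat.zero_le i) le_rfl h)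

section starCells

variable {ν μ : YoungDiagram}

theorem mem_starCells {i j : ℕ} :
    (i, j) ∈ starCells ν μ ↔
      (μ.rowLen 0 ≤ j ∧ (i, j - μ.rowLen 0) ∈ ν) ∨ (ν.colLen 0 ≤ i ∧ (i - ν.colLen 0, j) ∈ μ) := by
  simp only [starCells, Finset.mem_union, Finset.mem_image, YoungDiagram.mem_cells, Prod.exists,
    Prod.mk.injEq]
  constructor
  · rintro (⟨a, b, hab, rfl, rfl⟩ | ⟨a, b, hab, rfl, rfl⟩) <;> simp [hab]
  · rintro (⟨hj, hν⟩ | ⟨hi, hμ⟩)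
    · exact Or.inl ⟨i, _, hν, rfl, by omega⟩
    · exact Or.inr ⟨_, j, hμ, by omega, rfl⟩

theorem word_starCells (T : SVT (starCells ν μ)) :
    T.word = blockWord T.entry 0 (ν.colLen 0) (μ.rowLen 0) (ν.rowLen 0) ++
      blockWord T.entry (ν.colLen 0) (μ.colLen 0) 0 (μ.rowLen 0) := by
  rw [T.word_eq_blockWord (h := ν.colLen 0 + μ.colLen 0) (w := μ.rowLen 0 + ν.rowLen 0),
    blockWord_add_cols, blockWord_add_rows_of_eq_empty_right, blockWord_add_rows_of_eq_empty_left,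
    Nat.zero_add, Nat.zero_add]
  · intro i hi j hj
    refine T.empty_off _ ?_
    rw [mem_starCells]
    omega
  · intro i hi j hj
    refine T.empty_off _ fun hc => ?_
    rcases mem_starCells.mp hc with ⟨-, hν⟩ | ⟨-, hμ⟩
    · have := YoungDiagram.lt_colLen_zero hν
      omega
    · have := YoungDiagram.lt_rowLen_zero hμ
      simp at this
  · rintro ⟨i, j⟩ hc
    rcases mem_starCells.mp hc with ⟨-, hν⟩ | ⟨-, hμ⟩
    · have := YoungDiagram.lt_colLen_zero hν
      have := YoungDiagram.lt_rowLen_zero hν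
      omega
    · have := YoungDiagram.lt_colLen_zero hμ
      have := YoungDiagram.lt_rowLen_zero hμ
      omega

end starCells

section RowCol

variable {ν : YoungDiagram} {k : ℕ}

theorem mem_rowShape {i j : ℕ} : (i, j) ∈ rowShape k ↔ i = 0 ∧ j < k := by
  simp [← YoungDiagram.mem_cells, rowShape, and_comm, eq_comm]

theorem mem_colShape {i j : ℕ} : (i, j) ∈ colShape k ↔ i < k ∧ j = 0 := by
  simp [← YoungDiagram.mem_cells, colShape, eq_comm]

theorem rowLen_rowShape : (rowShape k).rowLen 0 = k :=
  eq_of_forall_lt_iff fun j => by simp [← YoungDiagram.mem_iff_lt_rowLen, mem_rowShape]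

theorem colLen_rowShape (hk : 1 ≤ k) : (rowShape k).colLen 0 = 1 :=
  eq_of_forall_lt_iff fun i => by
    rw [← YoungDiagram.mem_iff_lt_colLen, mem_rowShape]
    omega

theorem rowLen_colShape (hk : 1 ≤ k) : (colShape k).rowLen 0 = 1 :=
  eq_of_forall_lt_iff fun j => by
    rw [← YoungDiagram.mem_iff_lt_rowLen, mem_colShape]
    omega

theorem colLen_colShape : (colShape k).colLen 0 = k :=
  eq_of_forall_lt_iff fun i => by simp [← YoungDiagram.mem_iff_lt_colLen, mem_colShape]

theorem mem_starCells_rowShape {i j : ℕ} :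
    (i, j) ∈ starCells ν (rowShape k) ↔ (k ≤ j ∧ (i, j - k) ∈ ν) ∨ (i = ν.colLen 0 ∧ j < k) := by
  rw [mem_starCells, rowLen_rowShape, mem_rowShape]
  grind

theorem mem_starCells_colShape (hk : 1 ≤ k) {i j : ℕ} :
    (i, j) ∈ starCells ν (colShape k) ↔
      (1 ≤ j ∧ (i, j - 1) ∈ ν) ∨ (ν.colLen 0 ≤ i ∧ i < ν.colLen 0 + k ∧ j = 0) := by
  rw [mem_starCells, rowLen_colShape hk, mem_colShape]
  grind

theorem word_starCells_rowShape (hk : 1 ≤ k) (T : SVT (starCells ν (rowShape k))) :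
    T.word = blockWord T.entry 0 (ν.colLen 0) k (ν.rowLen 0) ++
      blockWord T.entry (ν.colLen 0) 1 0 k := by
  rw [word_starCells, rowLen_rowShape, colLen_rowShape hk]

theorem word_starCells_colShape (hk : 1 ≤ k) (T : SVT (starCells ν (colShape k))) :
    T.word = blockWord T.entry 0 (ν.colLen 0) 1 (ν.rowLen 0) ++
      blockWord T.entry (ν.colLen 0) k 0 1 := by
  rw [word_starCells, rowLen_colShape hk, colLen_colShape]

end RowCol

/-- The cell of `ν∗(k)` matching a cell of `ν∗(1^k)`: the column `(1^k)` is laid down along the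
row `(k)`, and `ν` moves `k - 1` columns to the right. -/
def colToRow (ν : YoungDiagram) (k : ℕ) : ℕ × ℕ → ℕ × ℕ
  | (i, 0) => (ν.colLen 0, i - ν.colLen 0)
  | (i, j + 1) => (i, j + k)

def rowToCol (ν : YoungDiagram) (k : ℕ) (c : ℕ × ℕ) : ℕ × ℕ :=
  if c.2 < k then (ν.colLen 0 + c.2, 0) else (c.1, c.2 + 1 - k)

section RowCol

variable {ν : YoungDiagram} {k n : ℕ}

theorem colToRow_mem (hk : 1 ≤ k) {c : ℕ × ℕ} (hc : c ∈ starCells ν (colShape k)) :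
    colToRow ν k c ∈ starCells ν (rowShape k) := by
  obtain ⟨i, _ | j⟩ := c <;>
    simp only [colToRow, mem_starCells_colShape hk, mem_starCells_rowShape] at hc ⊢
  · rcases hc with ⟨h, -⟩ | ⟨h₁, h₂, -⟩
    · omega
    · exact Or.inr ⟨trivial, by omega⟩
  · simpa using hc

theorem rowToCol_mem (hk : 1 ≤ k) {c : ℕ × ℕ} (hc : c ∈ starCells ν (rowShape k)) :
    rowToCol ν k c ∈ starCells ν (colShape k) := by
  obtain ⟨i, j⟩ := c
  rw [mem_starCells_rowShape] at hc
  simp only [rowToCol]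
  split_ifs with hj <;> rw [mem_starCells_colShape hk]
  · omega
  · refine Or.inl ⟨by omega, ?_⟩
    simpa [show j + 1 - k - 1 = j - k by omega] using (hc.resolve_right (by omega)).2

theorem colToRow_rowToCol {c : ℕ × ℕ} (hc : c ∈ starCells ν (rowShape k)) :
    colToRow ν k (rowToCol ν k c) = c := by
  obtain ⟨i, j⟩ := c
  rw [mem_starCells_rowShape] at hc
  by_cases hj : j < k
  · simp only [rowToCol, if_pos hj, colToRow, Prod.mk.injEq]
    omega
  · obtain ⟨j, rfl⟩ : ∃ j', j = j' + k := ⟨j - k, by omega⟩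
    simp only [rowToCol, if_neg hj, show j + k + 1 - k = j + 1 by omega, colToRow]

theorem rowToCol_colToRow (hk : 1 ≤ k) {c : ℕ × ℕ} (hc : c ∈ starCells ν (colShape k)) :
    rowToCol ν k (colToRow ν k c) = c := by
  obtain ⟨i, _ | j⟩ := c <;> rw [mem_starCells_colShape hk] at hc
  · obtain ⟨h₁, h₂, -⟩ := hc.resolve_left (by omega)
    simp only [colToRow, rowToCol, show i - ν.colLen 0 < k by omega, if_true, Prod.mk.injEq,
      and_true]
    omega
  · simp [colToRow, rowToCol]
    omega

theorem colToRow_row_le (hk : 1 ≤ k) (T : SVT (starCells ν (rowShape k))) (i j : ℕ)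
    (h₁ : (i, j) ∈ starCells ν (colShape k)) (h₂ : (i, j + 1) ∈ starCells ν (colShape k)) :
    ∀ a ∈ T.entry (colToRow ν k (i, j)), ∀ b ∈ T.entry (colToRow ν k (i, j + 1)), a ≤ b := by
  rcases j with _ | j
  · rw [mem_starCells_colShape hk] at h₁ h₂
    rcases h₂ with ⟨-, hν⟩ | ⟨-, -, h⟩
    · have := YoungDiagram.lt_colLen_zero hν
      omega
    · omega
  · have hm₁ := colToRow_mem hk h₁
    have hm₂ := colToRow_mem hk h₂
    simp only [colToRow, show j + 1 + k = j + k + 1 by omega] at hm₁ hm₂ ⊢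
    exact T.row_le i (j + k) hm₁ hm₂

theorem colToRow_col_lt (hk : 1 ≤ k) (T : SVT (starCells ν (rowShape k)))
    (hstrict : ∀ j, j + 1 < k →
      ∀ a ∈ T.entry (ν.colLen 0, j), ∀ b ∈ T.entry (ν.colLen 0, j + 1), a < b) (i j : ℕ)
    (h₁ : (i, j) ∈ starCells ν (colShape k)) (h₂ : (i + 1, j) ∈ starCells ν (colShape k)) :
    ∀ a ∈ T.entry (colToRow ν k (i, j)), ∀ b ∈ T.entry (colToRow ν k (i + 1, j)), a < b := by
  rcases j with _ | j
  · rw [mem_starCells_colShape hk] at h₁ h₂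
    obtain ⟨hi, -, -⟩ := h₁.resolve_left (by omega)
    obtain ⟨-, hi', -⟩ := h₂.resolve_left (by omega)
    simp only [colToRow, show i + 1 - ν.colLen 0 = i - ν.colLen 0 + 1 by omega]
    exact hstrict _ (by omega)
  · exact T.col_lt i (j + k) (colToRow_mem hk h₁) (colToRow_mem hk h₂)

theorem rowToCol_row_le (hk : 1 ≤ k) (T : SVT (starCells ν (colShape k))) (i j : ℕ)
    (h₁ : (i, j) ∈ starCells ν (rowShape k)) (h₂ : (i, j + 1) ∈ starCells ν (rowShape k)) :
    ∀ a ∈ T.entry (rowToCol ν k (i, j)), ∀ b ∈ T.entry (rowToCol ν k (i, j + 1)), a ≤ b := by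
  have hm₁ := rowToCol_mem hk h₁
  have hm₂ := rowToCol_mem hk h₂
  rw [mem_starCells_rowShape] at h₁ h₂
  by_cases hj : k ≤ j
  · simp only [rowToCol, show ¬j < k by omega, show ¬j + 1 < k by omega, if_false,
      show j + 1 + 1 - k = j + 1 - k + 1 by omega] at hm₁ hm₂ ⊢
    exact T.row_le i _ hm₁ hm₂
  obtain ⟨rfl, -⟩ := h₁.resolve_left (by omega)
  rcases h₂ with ⟨-, hν⟩ | ⟨-, hj'⟩
  · have := YoungDiagram.lt_colLen_zero hν
    omega
  · simp only [rowToCol, show j < k by omega, hj', if_true, ← Nat.add_assoc] at hm₁ hm₂ ⊢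
    exact fun a ha b hb => (T.col_lt _ 0 hm₁ hm₂ a ha b hb).le

theorem rowToCol_col_lt (hk : 1 ≤ k) (T : SVT (starCells ν (colShape k))) (i j : ℕ)
    (h₁ : (i, j) ∈ starCells ν (rowShape k)) (h₂ : (i + 1, j) ∈ starCells ν (rowShape k)) :
    ∀ a ∈ T.entry (rowToCol ν k (i, j)), ∀ b ∈ T.entry (rowToCol ν k (i + 1, j)), a < b := by
  have hm₁ := rowToCol_mem hk h₁
  have hm₂ := rowToCol_mem hk h₂
  rw [mem_starCells_rowShape] at h₁ h₂
  by_cases hj : k ≤ j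
  · simp only [rowToCol, show ¬j < k by omega, if_false] at hm₁ hm₂ ⊢
    exact T.col_lt i _ hm₁ hm₂
  obtain ⟨rfl, -⟩ := h₁.resolve_left (by omega)
  omega

theorem add_mem_starCells_rowShape_iff (hk : 1 ≤ k) {i j : ℕ} :
    (i, j + k) ∈ starCells ν (rowShape k) ↔ (i, j + 1) ∈ starCells ν (colShape k) := by
  simp [mem_starCells_rowShape, mem_starCells_colShape hk]

theorem pairwise_ge_rowStrip (T : SVT (starCells ν (rowShape k))) :
    (blockWord T.entry (ν.colLen 0) 1 0 k).Pairwise (· ≥ ·) := by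
  rw [blockWord_one_row, List.pairwise_flatMap, List.pairwise_reverse]
  refine ⟨fun j _ => pairwise_cellWord _,
    List.pairwise_lt_range.imp_of_mem fun {j₁ j₂} _ hj₂ hlt x hx y hy => ?_⟩
  simp only [mem_cellWord, Nat.zero_add] at hx hy
  exact T.le_of_mem_row hlt (fun j _ hj => mem_starCells_rowShape.mpr
    (Or.inr ⟨rfl, by simp at hj₂; omega⟩)) hy hx

theorem nodup_colStrip (hk : 1 ≤ k) (T : SVT (starCells ν (colShape k))) :
    (blockWord T.entry (ν.colLen 0) k 0 1).Nodup := by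
  rw [blockWord_one_col, List.nodup_flatMap]
  refine ⟨fun _ _ => nodup_cellWord _,
    List.pairwise_lt_range.imp_of_mem fun {i₁ i₂} _ hi₂ hlt x hx hx' => ?_⟩
  simp only [mem_cellWord] at hx hx'
  simp only [List.mem_range] at hi₂
  exact (T.lt_of_mem_col (by omega : ν.colLen 0 + i₁ < ν.colLen 0 + i₂)
    (fun i h₁ h₂ => (mem_starCells_colShape hk).mpr (Or.inr ⟨by omega, by omega, rfl⟩))
    hx hx').false

theorem nodup_rowStrip (hk : 1 ≤ k) {T : SVT (starCells ν (rowShape k))}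
    (hT : IsLatticeWordOfContent (staircaseContent n) T.word) :
    (blockWord T.entry (ν.colLen 0) 1 0 k).Nodup := by
  rw [word_starCells_rowShape hk] at hT
  exact hT.nodup_of_pairwise_ge (pairwise_ge_rowStrip T) fun _ => T.pos_of_mem_blockWord

theorem rowStrip_lt (hk : 1 ≤ k) {T : SVT (starCells ν (rowShape k))}
    (hT : IsLatticeWordOfContent (staircaseContent n) T.word) :
    ∀ j, j + 1 < k → ∀ a ∈ T.entry (ν.colLen 0, j), ∀ b ∈ T.entry (ν.colLen 0, j + 1), a < b := by
  intro j hj a ha b hb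
  have hmem : ∀ j < k, (ν.colLen 0, j) ∈ starCells ν (rowShape k) := fun j hj =>
    mem_starCells_rowShape.mpr (Or.inr ⟨rfl, hj⟩)
  refine lt_of_le_of_ne (T.row_le _ _ (hmem j (by omega)) (hmem _ hj) a ha b hb) fun hab => ?_
  have hV := nodup_rowStrip hk hT
  rw [blockWord_one_row, List.nodup_flatMap, List.pairwise_reverse] at hV
  exact hV.2.rel_of_lt_of_lt_range (Nat.lt_succ_self j) hj
    (by simpa using hb) (by simpa [hab] using ha)

def SVT.toCol (hk : 1 ≤ k) (T : SVT (starCells ν (rowShape k)))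
    (hstrict : ∀ j, j + 1 < k →
      ∀ a ∈ T.entry (ν.colLen 0, j), ∀ b ∈ T.entry (ν.colLen 0, j + 1), a < b) :
    SVT (starCells ν (colShape k)) :=
  T.comap (colToRow ν k) (fun _ => colToRow_mem hk) (colToRow_row_le hk T)
    (colToRow_col_lt hk T hstrict)

def SVT.toRow (hk : 1 ≤ k) (T : SVT (starCells ν (colShape k))) : SVT (starCells ν (rowShape k)) :=
  T.comap (rowToCol ν k) (fun _ => rowToCol_mem hk) (rowToCol_row_le hk T) (rowToCol_col_lt hk T)

theorem SVT.toRow_toCol (hk : 1 ≤ k) (T : SVT (starCells ν (rowShape k))) (hstrict) :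
    (T.toCol hk hstrict).toRow hk = T :=
  SVT.comap_comap (fun _ => rowToCol_mem hk) fun _ => colToRow_rowToCol

theorem SVT.toCol_toRow (hk : 1 ≤ k) (T : SVT (starCells ν (colShape k))) (hstrict) :
    (T.toRow hk).toCol hk hstrict = T :=
  SVT.comap_comap (fun _ => colToRow_mem hk) fun _ => rowToCol_colToRow hk

theorem isLatticeWordOfContent_toCol (hk : 1 ≤ k) {T : SVT (starCells ν (rowShape k))}
    (hT : IsLatticeWordOfContent (staircaseContent n) T.word) {hstrict} :
    IsLatticeWordOfContent (staircaseContent n) (T.toCol hk hstrict).word := by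
  have hupper : blockWord (T.toCol hk hstrict).entry 0 (ν.colLen 0) 1 (ν.rowLen 0) =
      blockWord T.entry 0 (ν.colLen 0) k (ν.rowLen 0) := blockWord_congr fun i _ j _ => by
    rw [Nat.add_comm 1, Nat.add_comm k, SVT.toCol,
      SVT.comap_entry (add_mem_starCells_rowShape_iff hk).mp]
    rfl
  have hstrip : (blockWord T.entry (ν.colLen 0) 1 0 k).Perm
      (blockWord (T.toCol hk hstrict).entry (ν.colLen 0) k 0 1) :=
    blockWord_one_row_perm fun j hj => by
      rw [SVT.toCol, SVT.comap_entry fun _ =>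
        (mem_starCells_colShape hk).mpr (Or.inr ⟨by omega, by omega, rfl⟩)]
      simp [colToRow]
  have hV := nodup_rowStrip hk hT
  rw [word_starCells_rowShape hk] at hT
  rw [word_starCells_colShape hk, hupper]
  exact hT.append_perm hV hstrip

theorem isLatticeWordOfContent_toRow (hk : 1 ≤ k) {T : SVT (starCells ν (colShape k))}
    (hT : IsLatticeWordOfContent (staircaseContent n) T.word) :
    IsLatticeWordOfContent (staircaseContent n) (T.toRow hk).word := by
  have hupper : blockWord (T.toRow hk).entry 0 (ν.colLen 0) k (ν.rowLen 0) =
      blockWord T.entry 0 (ν.colLen 0) 1 (ν.rowLen 0) := blockWord_congr fun i _ j _ => by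
    have hsub : j + k + 1 - k = j + 1 := by omega
    rw [Nat.add_comm 1, Nat.add_comm k, SVT.toRow,
      SVT.comap_entry fun h =>
        (add_mem_starCells_rowShape_iff hk).mpr (by simpa [rowToCol, hsub] using h)]
    simp [rowToCol, hsub]
  have hstrip : (blockWord (T.toRow hk).entry (ν.colLen 0) 1 0 k).Perm
      (blockWord T.entry (ν.colLen 0) k 0 1) :=
    blockWord_one_row_perm fun j hj => by
      rw [SVT.toRow, SVT.comap_entry fun _ => mem_starCells_rowShape.mpr (Or.inr ⟨rfl, by omega⟩)]
      simp [rowToCol, hj]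
  rw [word_starCells_colShape hk] at hT
  rw [word_starCells_rowShape hk, hupper]
  exact hT.append_perm (nodup_colStrip hk T) hstrip.symm

end RowCol

def latticeEquiv {ν : YoungDiagram} {k : ℕ} (hk : 1 ≤ k) (n : ℕ) :
    {T : SVT (starCells ν (rowShape k)) // IsLatticeWordOfContent (staircaseContent n) T.word} ≃
      {T : SVT (starCells ν (colShape k)) // IsLatticeWordOfContent (staircaseContent n) T.word}
    where
  toFun T := ⟨T.1.toCol hk (rowStrip_lt hk T.2), isLatticeWordOfContent_toCol hk T.2⟩
  invFun T := ⟨T.1.toRow hk, isLatticeWordOfContent_toRow hk T.2⟩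
  left_inv T := Subtype.ext (T.1.toRow_toCol hk (rowStrip_lt hk T.2))
  right_inv T :=
    Subtype.ext (T.1.toCol_toRow hk (rowStrip_lt hk (isLatticeWordOfContent_toRow hk T.2)))

theorem littlewood_richardson_row_col_general (ν : YoungDiagram) (k n : ℕ) (hk : 1 ≤ k) :
    latticeCount (starCells ν (rowShape k)) (staircaseContent n) =
      latticeCount (starCells ν (colShape k)) (staircaseContent n) :=
  Nat.card_congr (latticeEquiv hk n)

/-- `c^{ρ_n}_{(k)ν} = c^{ρ_n}_{(1^k)ν}` for `1 ≤ k ≤ n`: the number of set-valued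
tableaux of shape `ν∗(k)` whose reverse reading word is a lattice word with content
`ρ_n = (n, n-1, …, 1)` equals the number of set-valued tableaux of shape `ν∗(1^k)` whose
reverse reading word is a lattice word with content `ρ_n`. -/
theorem littlewood_richardson_row_col (ν : YoungDiagram) (k n : ℕ) (hk : 1 ≤ k)
    (hkn : k ≤ n) :
    latticeCount (starCells ν (rowShape k)) (staircaseContent n) =
      latticeCount (starCells ν (colShape k)) (staircaseContent n) :=
  littlewood_richardson_row_col_general ν k n hk

end Stembridge
end
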